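/- Walk generating function between vertices of cycle graphs: for every n ≥ 3 and every integer d with 1 ≤ d ≤ n/2, in ℤ[[z]] one has (Q_{n−1} − 2z²·Q_{n−2} − 2zⁿ) · (Σ_{m≥0} N_m z^m) = z^{n−d}·Q_{d−1} + z^d·Q_{n−d−1}, where N_m is the number of walks of length m from vertex 1 to vertex 1 + d in the cycle graph C_n. -/

import Mathlib

/-!
Let `A` be the adjacency matrix of `C_n` and `F_k = Σ_m (A^m)_{1,k} z^m`, so that the row vector
`F` satisfies `F (1 - zA) = e_1`. Put `R_j = Q_{j-1}` (with `R_0 = 0`) and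
`w_j = z^j R_{n-j} + z^{n-j} R_j`, and let `c_k = w_j` where `j ≡ k - (1 + d) mod n`. The
three-term recurrence of `Q` makes `c_k - z(c_{k-1} + c_{k+1})` vanish at every vertex except
`1 + d`, where the wrap-around leaves `P = Q_{n-1} - 2z²Q_{n-2} - 2zⁿ`; that is,
`(1 - zA) c = P e_{1+d}`. Evaluating `F (1 - zA) c` both ways gives `P F_{1+d} = c_1 = w_{n-d}`.
-/

noncomputable def Qpoly : ℕ → PowerSeries ℤ
  | 0 => 1
  | 1 => 1
  | k + 2 => Qpoly (k + 1) - PowerSeries.X ^ 2 * Qpoly k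

/-- Vertex `i` of the path `P_k` has index `i - 1`. -/
def pathAdj (k : ℕ) : Matrix (Fin k) (Fin k) ℤ :=
  Matrix.of fun i j => if i.val + 1 = j.val ∨ j.val + 1 = i.val then 1 else 0

/-- Vertex `i` of the cycle `C_n` has index `i - 1`. -/
def cycleAdj (n : ℕ) : Matrix (Fin n) (Fin n) ℤ :=
  Matrix.of fun i j =>
    if i.val + 1 = j.val ∨ j.val + 1 = i.val ∨
        (i.val = n - 1 ∧ j.val = 0) ∨ (j.val = n - 1 ∧ i.val = 0)
    then 1 else 0

open PowerSeries Matrix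

theorem apply_mul_eq_of_vecMul_eq_single_of_mulVec_eq_single {R ι : Type*} [CommSemiring R]
    [Fintype ι] [DecidableEq ι] {M : Matrix ι ι R} {u v : ι → R} {i j : ι} {p : R}
    (hu : u ᵥ* M = Pi.single i 1) (hv : M *ᵥ v = Pi.single j p) : u j * p = v i := by
  have h := dotProduct_mulVec u M v
  rwa [hv, hu, dotProduct_single, single_dotProduct, one_mul] at h

noncomputable def walkSeries {R ι : Type*} [Semiring R] [Fintype ι] [DecidableEq ι]
    (A : Matrix ι ι R) (i j : ι) : R⟦X⟧ :=
  mk fun m => (A ^ m) i j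

theorem walkSeries_vecMul_one_sub_X_smul {R ι : Type*} [CommRing R] [Fintype ι] [DecidableEq ι]
    (A : Matrix ι ι R) (i : ι) :
    walkSeries A i ᵥ* (1 - (X : R⟦X⟧) • A.map C) = Pi.single i 1 := by
  ext k m
  rw [vecMul_sub, vecMul_one, vecMul_smul, Pi.sub_apply, Pi.smul_apply, smul_eq_mul, map_sub]
  cases m with
  | zero => simp [walkSeries, Pi.single_apply, one_apply, eq_comm, apply_ite (coeff 0)]
  | succ m =>
    simp [walkSeries, vecMul, dotProduct, pow_succ, mul_apply, Pi.single_apply, map_sum, mul_comm,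
      apply_ite (coeff (m + 1))]

theorem Fin.val_add_one_eq_ite {n : ℕ} [NeZero n] (j : Fin n) :
    (j + 1).val = if j.val + 1 = n then 0 else j.val + 1 := by
  obtain ⟨m, rfl⟩ := Nat.exists_eq_succ_of_ne_zero (NeZero.ne n)
  rw [Fin.val_add_one]
  simp only [Fin.ext_iff, Fin.val_last, Nat.succ_eq_add_one, add_left_inj]

theorem Fin.val_sub_one_eq_ite {n : ℕ} [NeZero n] (j : Fin n) :
    (j - 1).val = if j.val = 0 then n - 1 else j.val - 1 := by
  obtain ⟨m, rfl⟩ := Nat.exists_eq_succ_of_ne_zero (NeZero.ne n)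
  rw [Fin.coe_sub_one]
  simp only [Fin.ext_iff, Fin.val_zero, Nat.succ_eq_add_one, add_tsub_cancel_right]

theorem cycleAdj_apply {n : ℕ} [NeZero n] (hn : 3 ≤ n) (i j : Fin n) :
    cycleAdj n i j = (if j = i - 1 then 1 else 0) + (if j = i + 1 then 1 else 0) := by
  have := i.isLt
  have := j.isLt
  simp only [cycleAdj, of_apply, Fin.ext_iff, Fin.val_add_one_eq_ite, Fin.val_sub_one_eq_ite]
  split_ifs <;> omega

theorem cycleAdj_map_mulVec {S : Type*} [NonAssocSemiring S] (f : ℤ →+* S) {n : ℕ} [NeZero n]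
    (hn : 3 ≤ n) (v : Fin n → S) :
    (cycleAdj n).map f *ᵥ v = fun k => v (k - 1) + v (k + 1) := by
  ext k
  simp only [mulVec, dotProduct, map_apply, cycleAdj_apply hn, map_add, apply_ite f, map_one,
    map_zero, add_mul, ite_mul, one_mul, zero_mul, Finset.sum_add_distrib, Fintype.sum_ite_eq']

/-- `Rpoly 0 = 0` continues the recurrence of `Qpoly` one step down. -/
noncomputable def Rpoly : ℕ → ℤ⟦X⟧
  | 0 => 0
  | k + 1 => Qpoly k

theorem Rpoly_add_two (k : ℕ) : Rpoly (k + 2) = Rpoly (k + 1) - X ^ 2 * Rpoly k := by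
  cases k with
  | zero => simp [Rpoly, Qpoly]
  | succ k => rfl

theorem Rpoly_of_pos {k : ℕ} (hk : 1 ≤ k) : Rpoly k = Qpoly (k - 1) := by
  obtain ⟨l, rfl⟩ : ∃ l, k = l + 1 := ⟨k - 1, by omega⟩
  rfl

noncomputable def cyclePotential (n j : ℕ) : ℤ⟦X⟧ :=
  X ^ j * Rpoly (n - j) + X ^ (n - j) * Rpoly j

theorem cyclePotential_symm {n j : ℕ} (h : j ≤ n) :
    cyclePotential n (n - j) = cyclePotential n j := by
  rw [cyclePotential, cyclePotential, Nat.sub_sub_self h, add_comm]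

theorem X_mul_cyclePotential_pred_add_succ {n j : ℕ} (h1 : 1 ≤ j) (h2 : j < n) :
    X * (cyclePotential n (j - 1) + cyclePotential n (j + 1)) = cyclePotential n j := by
  obtain ⟨i, rfl⟩ : ∃ i, j = i + 1 := ⟨j - 1, by omega⟩
  obtain ⟨l, rfl⟩ : ∃ l, n = i + l + 2 := ⟨n - i - 2, by omega⟩
  simp only [cyclePotential, show i + l + 2 - i = l + 2 by omega,
    show i + l + 2 - (i + 1) = l + 1 by omega, show i + l + 2 - (i + 1 + 1) = l by omega,
    add_tsub_cancel_right, Rpoly_add_two]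
  ring

theorem cyclePotential_zero_sub_X_mul {n : ℕ} (hn : 2 ≤ n) :
    cyclePotential n 0 - X * (cyclePotential n (n - 1) + cyclePotential n 1) =
      Qpoly (n - 1) - 2 * X ^ 2 * Qpoly (n - 2) - 2 * X ^ n := by
  obtain ⟨l, rfl⟩ : ∃ l, n = l + 2 := ⟨n - 2, by omega⟩
  rw [cyclePotential_symm (by omega)]
  simp only [cyclePotential, show l + 2 - 1 = l + 1 by omega, add_tsub_cancel_right, Nat.sub_zero,
    Rpoly, Qpoly]
  ring

theorem cyclePotential_val_sub_X_mul {n : ℕ} [NeZero n] (hn : 2 ≤ n) (j : Fin n) :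
    cyclePotential n j - X * (cyclePotential n (j - 1 : Fin n) + cyclePotential n (j + 1 : Fin n)) =
      if j = 0 then Qpoly (n - 1) - 2 * X ^ 2 * Qpoly (n - 2) - 2 * X ^ n else 0 := by
  have hj := j.isLt
  by_cases h0 : j = 0
  · have h1 : (1 : ℕ) < n := by omega
    simp only [h0, Fin.val_zero, Fin.val_sub_one_eq_ite, zero_add, Fin.val_one',
      Nat.mod_eq_of_lt h1, ↓reduceIte]
    exact cyclePotential_zero_sub_X_mul hn
  · have hj0 : j.val ≠ 0 := Fin.val_ne_iff.mpr h0
    have hnext : cyclePotential n (j + 1 : Fin n) = cyclePotential n (j.val + 1) := by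
      rw [Fin.val_add_one_eq_ite]
      split_ifs with hlast
      · rw [hlast, ← cyclePotential_symm (Nat.zero_le n), Nat.sub_zero]
      · rfl
    rw [if_neg h0, hnext, Fin.val_sub_one_eq_ite, if_neg hj0,
      X_mul_cyclePotential_pred_add_succ (by omega) hj, sub_self]

theorem one_sub_X_smul_cycleAdj_mulVec_cyclePotential {n : ℕ} [NeZero n] (hn : 3 ≤ n)
    (d : Fin n) :
    (1 - (X : ℤ⟦X⟧) • (cycleAdj n).map C) *ᵥ (fun k => cyclePotential n (k - d : Fin n)) =
      Pi.single d (Qpoly (n - 1) - 2 * X ^ 2 * Qpoly (n - 2) - 2 * X ^ n) := by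
  funext k
  rw [sub_mulVec, one_mulVec, smul_mulVec, cycleAdj_map_mulVec C hn]
  simp only [Pi.sub_apply, Pi.smul_apply, smul_eq_mul, Pi.single_apply]
  rw [sub_right_comm, add_sub_right_comm, cyclePotential_val_sub_X_mul (by omega)]
  simp only [sub_eq_zero]

/-- Walk generating function between vertices of cycle graphs: for
`n ≥ 3` and `1 ≤ d ≤ n/2`,
`(Q_{n-1} − 2z²·Q_{n-2} − 2zⁿ) · (Σ_m N_m z^m) = z^{n-d}·Q_{d-1} + z^d·Q_{n-d-1}` in
`ℤ[[z]]`, where `N_m` is the number of walks of length `m` from vertex `1` to vertex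
`1 + d` in `C_n` (the corresponding entry of the `m`-th power of the adjacency
matrix, with vertex `i` carried by index `i − 1`). -/
theorem stmt18 (n d : ℕ) (hn : 3 ≤ n) (hd1 : 1 ≤ d) (hd2 : 2 * d ≤ n) :
    (Qpoly (n - 1) - 2 * PowerSeries.X ^ 2 * Qpoly (n - 2) - 2 * PowerSeries.X ^ n) *
        PowerSeries.mk
          (fun m => ((cycleAdj n ^ m) ⟨0, by omega⟩ ⟨d, by omega⟩ : ℤ)) =
      PowerSeries.X ^ (n - d) * Qpoly (d - 1) + PowerSeries.X ^ d * Qpoly (n - d - 1) := by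
  have : NeZero n := ⟨by omega⟩
  have key := apply_mul_eq_of_vecMul_eq_single_of_mulVec_eq_single
    (walkSeries_vecMul_one_sub_X_smul (cycleAdj n) ⟨0, by omega⟩)
    (one_sub_X_smul_cycleAdj_mulVec_cyclePotential hn ⟨d, by omega⟩)
  have hval : ((⟨0, by omega⟩ - ⟨d, by omega⟩ : Fin n) : ℕ) = n - d := by
    rw [Fin.sub_def]
    exact Nat.mod_eq_of_lt (by simp only; omega)
  rw [mul_comm, walkSeries] at key
  rw [key, hval, cyclePotential, Nat.sub_sub_self (by omega), Rpoly_of_pos hd1,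
    Rpoly_of_pos (by omega), add_comm]
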